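/- Let g ≥ 2 and let d, d' be integers, with G_d := gcd(d − g + 1, 2g − 2) and G_{d'} := gcd(d' − g + 1, 2g − 2). Then G_d = G_{d'} if and only if a stable vine curve of genus g is d-special exactly when it is d'-special (i.e., the set of d-special triples (g₁, g₂, k) equals the set of d'-special triples). -/

import Mathlib

/-!
Written as `|eᵢ - d wᵢ / (2g - 2)| ≤ k / 2`, the Basic Inequalities on the two components have
opposite deviations, so a vine curve is `d`-special iff `d w₁ / (2g - 2) + k / 2` is an integer,
i.e. iff `2g - 2 ∣ (d - g + 1) w₁`, i.e. iff `2g - 2 ∣ G_d w₁`. On vine curves of genus `g`, `w₁`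
takes every value in `[1, 2g - 3]`; choosing `w₁ = (2g - 2) / G_d` shows that `G_d ∣ G_{d'}`
whenever every `d`-special curve is `d'`-special.
-/

/-- `(g₁, g₂, k)` encodes a stable vine curve of genus `g`: two smooth irreducible
components of genera `g₁, g₂` meeting in `k` nodes. -/
def StableVine (g g₁ g₂ k : ℤ) : Prop :=
  0 ≤ g₁ ∧ 0 ≤ g₂ ∧ 1 ≤ k ∧ g = g₁ + g₂ + k - 1 ∧ ((g₁ = 0 ∨ g₂ = 0) → 3 ≤ k)

/-- The Basic Inequality for a component of `ω`-degree `w`, with `k` nodes, on a curve of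
genus `g`, for total degree `d` and partial degree `e`. -/
def BasicIneq (g d k w e : ℤ) : Prop :=
  (d : ℚ) * w / (2 * g - 2) - k / 2 ≤ e ∧ (e : ℚ) ≤ (d : ℚ) * w / (2 * g - 2) + k / 2

/-- The strict version of the Basic Inequality. -/
def BasicIneqStrict (g d k w e : ℤ) : Prop :=
  (d : ℚ) * w / (2 * g - 2) - k / 2 < e ∧ (e : ℚ) < (d : ℚ) * w / (2 * g - 2) + k / 2

/-- `(e₁, e₂)` is a balanced multidegree of total degree `d` on the vine curve `(g₁, g₂, k)`. -/
def IsBalanced (g d g₁ g₂ k e₁ e₂ : ℤ) : Prop :=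
  e₁ + e₂ = d ∧ BasicIneq g d k (2 * g₁ - 2 + k) e₁ ∧ BasicIneq g d k (2 * g₂ - 2 + k) e₂

/-- `(e₁, e₂)` is a stably balanced multidegree of total degree `d` on `(g₁, g₂, k)`. -/
def IsStablyBalanced (g d g₁ g₂ k e₁ e₂ : ℤ) : Prop :=
  e₁ + e₂ = d ∧ BasicIneqStrict g d k (2 * g₁ - 2 + k) e₁ ∧
    BasicIneqStrict g d k (2 * g₂ - 2 + k) e₂

/-- The vine curve `(g₁, g₂, k)` is `d`-special: it admits a balanced multidegree of total
degree `d` which is not stably balanced. -/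
def DSpecial (g d g₁ g₂ k : ℤ) : Prop :=
  ∃ e₁ e₂ : ℤ, IsBalanced g d g₁ g₂ k e₁ e₂ ∧ ¬ IsStablyBalanced g d g₁ g₂ k e₁ e₂

lemma basicIneq_iff_abs_le (g d k w e : ℤ) :
    BasicIneq g d k w e ↔ |(e : ℚ) - d * w / (2 * g - 2)| ≤ k / 2 := by
  rw [BasicIneq, abs_sub_le_iff]
  constructor <;> rintro ⟨h₁, h₂⟩ <;> constructor <;> linarith

lemma basicIneqStrict_iff_abs_lt (g d k w e : ℤ) :
    BasicIneqStrict g d k w e ↔ |(e : ℚ) - d * w / (2 * g - 2)| < k / 2 := by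
  rw [BasicIneqStrict, abs_sub_lt_iff]
  constructor <;> rintro ⟨h₁, h₂⟩ <;> constructor <;> linarith

lemma deviation_eq_neg_of_add_eq {g d w₁ w₂ e₁ e₂ : ℤ} (hg : g ≠ 1) (hw : w₁ + w₂ = 2 * g - 2)
    (he : e₁ + e₂ = d) :
    (e₂ : ℚ) - d * w₂ / (2 * g - 2) = -((e₁ : ℚ) - d * w₁ / (2 * g - 2)) := by
  have hn : (2 * g - 2 : ℚ) ≠ 0 := by
    rw [sub_ne_zero]; exact_mod_cast (by omega : 2 * g ≠ 2)
  have hw' : (w₂ : ℚ) = 2 * g - 2 - w₁ := by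
    rw [eq_sub_iff_add_eq']; exact_mod_cast hw
  have he' : (e₂ : ℚ) = d - e₁ := by
    rw [eq_sub_iff_add_eq']; exact_mod_cast he
  rw [hw', he', mul_sub, sub_div, mul_div_cancel_right₀ _ hn]
  ring

lemma dSpecial_iff_exists_abs_eq {g d g₁ g₂ k : ℤ} (hg : g ≠ 1) (hgenus : g = g₁ + g₂ + k - 1) :
    DSpecial g d g₁ g₂ k ↔
      ∃ e : ℤ, |(e : ℚ) - d * ((2 * g₁ - 2 + k : ℤ) : ℚ) / (2 * g - 2)| = k / 2 := by
  have hw : (2 * g₁ - 2 + k) + (2 * g₂ - 2 + k) = 2 * g - 2 := by omega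
  simp only [DSpecial, IsBalanced, IsStablyBalanced, basicIneq_iff_abs_le,
    basicIneqStrict_iff_abs_lt]
  constructor
  · rintro ⟨e₁, e₂, ⟨he, h₁, h₂⟩, hns⟩
    rw [deviation_eq_neg_of_add_eq hg hw he, abs_neg] at h₂ hns
    exact ⟨e₁, le_antisymm h₁ (not_lt.mp fun h => hns ⟨he, h, h⟩)⟩
  · rintro ⟨e, he⟩
    have hsum : e + (d - e) = d := by ring
    refine ⟨e, d - e, ⟨hsum, he.le, ?_⟩, fun ⟨_, h, _⟩ => h.ne he⟩
    rw [deviation_eq_neg_of_add_eq hg hw hsum, abs_neg]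
    exact he.le

lemma exists_intCast_abs_sub_eq_iff {c : ℚ} {k : ℤ} (hk : 0 ≤ k) :
    (∃ e : ℤ, |(e : ℚ) - c| = k / 2) ↔ ∃ e : ℤ, (e : ℚ) = c + k / 2 := by
  have hk' : (0 : ℚ) ≤ k / 2 := by positivity
  constructor
  · rintro ⟨e, he⟩
    rcases (abs_eq hk').mp he with h | h
    · exact ⟨e, by linarith⟩
    · exact ⟨e + k, by push_cast; linarith⟩
  · rintro ⟨e, he⟩
    exact ⟨e, by rw [he, add_sub_cancel_left, abs_of_nonneg hk']⟩

lemma exists_intCast_eq_div_add_iff {a n m : ℤ} (hn : n ≠ 0) :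
    (∃ e : ℤ, (e : ℚ) = a / n + m) ↔ n ∣ a := by
  have hn' : (n : ℚ) ≠ 0 := by exact_mod_cast hn
  constructor
  · rintro ⟨e, he⟩
    have hdiv : (a : ℚ) / n = (e - m : ℤ) := by push_cast; linarith
    rw [div_eq_iff hn'] at hdiv
    exact ⟨e - m, by rw [mul_comm]; exact_mod_cast hdiv⟩
  · rintro ⟨c, rfl⟩
    exact ⟨c + m, by push_cast; field_simp⟩

lemma dSpecial_iff_dvd {g d g₁ g₂ k : ℤ} (hg : g ≠ 1) (hk : 0 ≤ k)
    (hgenus : g = g₁ + g₂ + k - 1) :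
    DSpecial g d g₁ g₂ k ↔ 2 * g - 2 ∣ (d - g + 1) * (2 * g₁ - 2 + k) := by
  have hg' : (g : ℚ) - 1 ≠ 0 := by
    rw [sub_ne_zero]; exact_mod_cast hg
  /- The boundary value `d w₁ / (2g - 2) + k / 2` differs from `(d - g + 1) w₁ / (2g - 2)` by
  `w₁ / 2 + k / 2 = g₁ - 1 + k`. -/
  have hcenter : (d : ℚ) * ((2 * g₁ - 2 + k : ℤ) : ℚ) / (2 * g - 2) + k / 2 =
      (((d - g + 1) * (2 * g₁ - 2 + k) : ℤ) : ℚ) / ((2 * g - 2 : ℤ) : ℚ) +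
        ((g₁ - 1 + k : ℤ) : ℚ) := by
    push_cast
    field_simp
    ring
  rw [dSpecial_iff_exists_abs_eq hg hgenus, exists_intCast_abs_sub_eq_iff hk, hcenter,
    exists_intCast_eq_div_add_iff (by omega)]

lemma dSpecial_iff_dvd_mul_gcd {g d g₁ g₂ k : ℤ} (hg : g ≠ 1) (hk : 0 ≤ k)
    (hgenus : g = g₁ + g₂ + k - 1) :
    DSpecial g d g₁ g₂ k ↔ 2 * g - 2 ∣ (2 * g₁ - 2 + k) * Int.gcd (d - g + 1) (2 * g - 2) := by
  rw [dSpecial_iff_dvd hg hk hgenus, Int.coe_gcd, gcd_comm, dvd_mul_gcd_iff_dvd_mul,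
    mul_comm (d - g + 1)]

lemma exists_stableVine_omegaDegree_eq {g w : ℤ} (hw₁ : 1 ≤ w) (hw₂ : w ≤ 2 * g - 3) :
    ∃ g₁ g₂ k : ℤ, StableVine g g₁ g₂ k ∧ 2 * g₁ - 2 + k = w := by
  rcases Int.even_or_odd' w with ⟨t, rfl | rfl⟩
  · exact ⟨t, g - t - 1, 2, ⟨by omega, by omega, by omega, by omega, by omega⟩, by omega⟩
  · exact ⟨t + 1, g - t - 1, 1, ⟨by omega, by omega, by omega, by omega, by omega⟩, by omega⟩

lemma dvd_of_forall_dvd_mul_imp {n a b : ℤ} (hn : 0 < n) (ha : 0 < a) (han : a ∣ n)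
    (h : ∀ w, 0 < w → w < n → n ∣ w * a → n ∣ w * b) : a ∣ b := by
  obtain rfl | ha₁ := eq_or_lt_of_le (show 1 ≤ a by omega)
  · exact one_dvd b
  -- test with `w = n / a`, which lies in `(0, n)` once `a ≥ 2`
  obtain ⟨t, rfl⟩ := han
  have ht : 0 < t := pos_of_mul_pos_right hn ha.le
  have htn : t < a * t := lt_mul_left ht ha₁
  have hdvd : a * t ∣ t * b := h t ht htn (by rw [mul_comm])
  rw [mul_comm t] at hdvd
  exact (mul_dvd_mul_iff_right ht.ne').mp hdvd

/-- Corollary 2.13 (vine-curve form): `G_d = G_{d'}` iff the `d`-special and `d'`-special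
stable vine curves of genus `g` coincide. -/
theorem stmt_2 (g d d' : ℤ) (hg : 2 ≤ g) :
    Int.gcd (d - g + 1) (2 * g - 2) = Int.gcd (d' - g + 1) (2 * g - 2) ↔
      ∀ g₁ g₂ k : ℤ, StableVine g g₁ g₂ k →
        (DSpecial g d g₁ g₂ k ↔ DSpecial g d' g₁ g₂ k) := by
  have hn : 0 < 2 * g - 2 := by omega
  have hspecial : ∀ e g₁ g₂ k, StableVine g g₁ g₂ k → (DSpecial g e g₁ g₂ k ↔
      2 * g - 2 ∣ (2 * g₁ - 2 + k) * Int.gcd (e - g + 1) (2 * g - 2)) :=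
    fun _ _ _ _ ⟨_, _, hk, hgenus, _⟩ => dSpecial_iff_dvd_mul_gcd (by omega) (by omega) hgenus
  constructor
  · intro hgcd g₁ g₂ k hsv
    rw [hspecial d _ _ _ hsv, hspecial d' _ _ _ hsv, hgcd]
  · intro H
    have hw : ∀ w, 0 < w → w < 2 * g - 2 → (2 * g - 2 ∣ w * Int.gcd (d - g + 1) (2 * g - 2) ↔
        2 * g - 2 ∣ w * Int.gcd (d' - g + 1) (2 * g - 2)) := by
      intro w hw₀ hwn
      obtain ⟨g₁, g₂, k, hsv, rfl⟩ := exists_stableVine_omegaDegree_eq (g := g) hw₀ (by omega)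
      rw [← hspecial d _ _ _ hsv, ← hspecial d' _ _ _ hsv]
      exact H _ _ _ hsv
    have hpos : ∀ e, 0 < (Int.gcd e (2 * g - 2) : ℤ) := fun e =>
      Int.natCast_pos.mpr (Int.gcd_pos_of_ne_zero_right _ hn.ne')
    exact_mod_cast Int.dvd_antisymm (hpos _).le (hpos _).le
      (dvd_of_forall_dvd_mul_imp hn (hpos _) (Int.gcd_dvd_right _ _)
        fun w h₀ h₁ => (hw w h₀ h₁).1)
      (dvd_of_forall_dvd_mul_imp hn (hpos _) (Int.gcd_dvd_right _ _)
        fun w h₀ h₁ => (hw w h₀ h₁).2)
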